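/- (Uniform bounds for the Hopf–Lax semigroup of a bounded function.) If f: X → ℝ is bounded on a forward extended Polish space, then for every t > 0: inf_X f ≤ inf_X Q_t f ≤ sup_X Q_t f ≤ sup_X f; every minimizing sequence for Q_t f(y) stays within distance (p t^{p−1} osc(f))^{1/p} of y (i.e., 𝔡⁺(y,t) ≤ (p t^{p−1} osc(f))^{1/p}); and Q_t f is forward Lipschitz with Lip(Q_t f) ≤ 2^{p−1}·(p·osc(f)/t)^{1/q}, where osc(f) = sup f − inf f and 1/p + 1/q = 1. -/

import Mathlib

open Filter

/-- The reversibility `λ_d(A)` of a set `A`. -/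
noncomputable def reversibility {X : Type*} (d : X → X → ENNReal) (A : Set X) : ENNReal :=
  sInf {l : ENNReal | 1 ≤ l ∧ ∀ x ∈ A, ∀ y ∈ A, d x y ≤ l * d y x}

/-- `(X, τ, d)` is a forward extended Polish space. -/
structure IsForwardExtendedPolish (X : Type*) [TopologicalSpace X]
    (d : X → X → ENNReal) : Prop where
  zero_iff : ∀ x y : X, d x y = 0 ↔ x = y
  triangle : ∀ x y z : X, d x z ≤ d x y + d y z
  theta : ∃ Θ : X → ℝ → ℝ, (∀ x r, 0 < r → 1 ≤ Θ x r) ∧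
    (∀ x, MonotoneOn (Θ x) (Set.Ioi (0 : ℝ))) ∧
    (∀ x r, 0 < r →
      reversibility d {y | d x y < ENNReal.ofReal r} ≤ ENNReal.ofReal (Θ x r))
  fwdComplete : ∀ u : ℕ → X,
    (∀ ε : ENNReal, 0 < ε → ∃ N, ∀ i j, N ≤ i → i ≤ j → d (u i) (u j) < ε) →
    ∃ x : X, Tendsto (fun i => d x (u i)) atTop (nhds 0) ∧
      Tendsto (fun i => d (u i) x) atTop (nhds 0)
  polish : PolishSpace X
  backward_tendsto : ∀ (u : ℕ → X) (x : X),
    Tendsto (fun i => d (u i) x) atTop (nhds 0) → Tendsto u atTop (nhds x)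
  lsc : LowerSemicontinuous fun p : X × X => d p.1 p.2

/-- The Hopf–Lax integrand `Φ(t,x,y) = f(x) + d(x,y)^p/(p t^{p−1})`. -/
noncomputable def hlCost {X : Type*} (d : X → X → ENNReal) (p : ℝ) (f : X → EReal)
    (t : ℝ) (x y : X) : EReal :=
  f x + ((d x y ^ p / ENNReal.ofReal (p * t ^ (p - 1)) : ENNReal) : EReal)

/-- The Hopf–Lax semigroup `Q_t f(y) = inf_x Φ(t,x,y)`. -/
noncomputable def hlQ {X : Type*} (d : X → X → ENNReal) (p : ℝ) (f : X → EReal)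
    (t : ℝ) (y : X) : EReal :=
  ⨅ x : X, hlCost d p f t x y

/-- `𝔡⁺(y,t)`: the supremum of `limsup_i d(x_i,y)` over minimizing sequences `(x_i)` of
`x ↦ Φ(t,x,y)`. -/
noncomputable def hlDPlus {X : Type*} (d : X → X → ENNReal) (p : ℝ) (f : X → EReal)
    (y : X) (t : ℝ) : ENNReal :=
  ⨆ u : {u : ℕ → X //
      Tendsto (fun i => hlCost d p f t (u i) y) atTop (nhds (hlQ d p f t y))},
    Filter.limsup (fun i => d (u.1 i) y) atTop

/-- `𝔡⁻(y,t)`: the infimum of `liminf_i d(x_i,y)` over minimizing sequences `(x_i)` of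
`x ↦ Φ(t,x,y)`. -/
noncomputable def hlDMinus {X : Type*} (d : X → X → ENNReal) (p : ℝ) (f : X → EReal)
    (y : X) (t : ℝ) : ENNReal :=
  ⨅ u : {u : ℕ → X //
      Tendsto (fun i => hlCost d p f t (u i) y) atTop (nhds (hlQ d p f t y))},
    Filter.liminf (fun i => d (u.1 i) y) atTop

/-!
Comparing with `x = y` and dropping the distance term gives `m ≤ Q_t f ≤ f`. A cost
`f x + d(x,y)^p/(p t^{p-1}) ≤ B` forces `d(x,y)^p ≤ p t^{p-1}(B - m)`, which bounds every
minimizing sequence once `B ↓ Q_t f(y) ≤ M`.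

For the Lipschitz bound take an `ε`-minimizer `x` of `Q_t f(y)`; then
`d(x,y) ≤ R := (p t^{p-1}(M - m + ε))^{1/p}` and
`Q_t f(z) ≤ f x + (d(x,y) + d(y,z))^p/(p t^{p-1})`. If `d(y,z) ≤ R`, the mean value theorem
bounds `Q_t f(z) - Q_t f(y) - ε` by `p(2R)^{p-1} d(y,z)/(p t^{p-1})
= 2^{p-1}(p(M - m + ε)/t)^{1/q} d(y,z)`; if `d(y,z) > R`, the trivial bound `M - m` is already
smaller. Finally let `ε → 0`.
-/

lemma ContinuousAt.le_of_forall_lt_imp_le {α : Type*} [TopologicalSpace α] [Preorder α]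
    [ClosedIciTopology α] {g : ℝ → α} {a : ℝ} {c : α} (hg : ContinuousAt g a)
    (h : ∀ s, a < s → c ≤ g s) : c ≤ g a :=
  ge_of_tendsto (hg.tendsto.mono_left nhdsWithin_le_nhds)
    (eventually_nhdsWithin_of_forall (s := Set.Ioi a) h)

lemma rpow_add_sub_rpow_le {p a b : ℝ} (hp : 1 ≤ p) (ha : 0 ≤ a) (hb : 0 ≤ b) :
    (a + b) ^ p - a ^ p ≤ p * (a + b) ^ (p - 1) * b := by
  rcases hb.eq_or_lt with rfl | hb
  · simp
  obtain ⟨c, hc, hslope⟩ := exists_hasDerivAt_eq_slope (fun x => x ^ p)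
    (fun x => p * x ^ (p - 1)) (by linarith : a < a + b)
    (fun x _ => (Real.continuousAt_rpow_const x p (Or.inr (by linarith))).continuousWithinAt)
    (fun x _ => Real.hasDerivAt_rpow_const (Or.inr hp))
  rw [add_sub_cancel_left, eq_div_iff hb.ne'] at hslope
  rw [← hslope]
  gcongr
  · linarith [hc.1]
  · exact hc.2.le

lemma hopfLax_lipschitz_const_eq {p q t s : ℝ} (hp : 1 < p) (hq : 1 / p + 1 / q = 1)
    (ht : 0 < t) (hs : 0 < s) :
    p * (2 * (p * t ^ (p - 1) * s) ^ (1 / p)) ^ (p - 1) / (p * t ^ (p - 1)) =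
      2 ^ (p - 1) * (p * s / t) ^ (1 / q) := by
  have hp0 : 0 < p := by linarith
  set X := p * t ^ (p - 1) * s with hX
  have hX0 : 0 < X := by positivity
  have hpq : 1 / p * (p - 1) = 1 / q := by rw [show 1 / q = 1 - 1 / p by linarith]; field_simp
  have hst : p * s / t = X / t ^ p := by
    rw [hX, Real.rpow_sub ht, Real.rpow_one]; field_simp
  have htq : (t ^ p) ^ (1 / q) = t ^ (p - 1) := by
    rw [← Real.rpow_mul ht.le, ← hpq]; congr 1; field_simp
  rw [Real.mul_rpow zero_le_two (by positivity), ← Real.rpow_mul hX0.le, hpq, hst,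
    Real.div_rpow hX0.le (by positivity), htq]
  field_simp

section HopfLax

variable {X : Type*} {d : X → X → ENNReal} {p t m : ℝ} {f : X → ℝ}

lemma hlCost_eq_top (hp : 0 < p) {x y : X} (hxy : d x y = ⊤) :
    hlCost d p (fun x => (f x : EReal)) t x y = ⊤ := by
  rw [hlCost, hxy, ENNReal.top_rpow_of_pos hp, ENNReal.top_div_of_ne_top ENNReal.ofReal_ne_top,
    EReal.coe_ennreal_top, EReal.coe_add_top]

lemma hlCost_eq_coe (hp : 0 < p) (ht : 0 < t) {x y : X} (hxy : d x y ≠ ⊤) :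
    hlCost d p (fun x => (f x : EReal)) t x y =
      ((f x + (d x y).toReal ^ p / (p * t ^ (p - 1)) : ℝ) : EReal) := by
  have hC : 0 < p * t ^ (p - 1) := by positivity
  have hfin : d x y ^ p / ENNReal.ofReal (p * t ^ (p - 1)) ≠ ⊤ :=
    ENNReal.div_ne_top (ENNReal.rpow_ne_top_of_nonneg hp.le hxy) (by simpa using hC)
  rw [hlCost, ← EReal.coe_ennreal_toReal hfin, ← EReal.coe_add, ENNReal.toReal_div,
    ← ENNReal.toReal_rpow, ENNReal.toReal_ofReal hC.le]

lemma le_hlQ (hm : ∀ x, m ≤ f x) (y : X) :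
    (m : EReal) ≤ hlQ d p (fun x => (f x : EReal)) t y :=
  le_iInf fun x => (EReal.coe_le_coe_iff.2 (hm x)).trans (le_add_of_nonneg_right
    (EReal.coe_ennreal_nonneg _))

lemma hlQ_le (hp : 0 < p) {y : X} (hyy : d y y = 0) :
    hlQ d p (fun x => (f x : EReal)) t y ≤ f y :=
  (iInf_le _ y).trans_eq <| by
    rw [hlCost, hyy, ENNReal.zero_rpow_of_pos hp, ENNReal.zero_div, EReal.coe_ennreal_zero,
      add_zero]

lemma hlQ_ne_bot (hm : ∀ x, m ≤ f x) (y : X) : hlQ d p (fun x => (f x : EReal)) t y ≠ ⊥ :=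
  ((EReal.bot_lt_coe m).trans_le (le_hlQ hm y)).ne'

lemma hlQ_ne_top (hp : 0 < p) {y : X} (hyy : d y y = 0) :
    hlQ d p (fun x => (f x : EReal)) t y ≠ ⊤ :=
  ne_top_of_le_ne_top (EReal.coe_ne_top _) (hlQ_le hp hyy)

lemma le_toReal_hlQ (hp : 0 < p) (hm : ∀ x, m ≤ f x) {y : X} (hyy : d y y = 0) :
    m ≤ (hlQ d p (fun x => (f x : EReal)) t y).toReal := by
  simpa using EReal.toReal_le_toReal (le_hlQ hm y) (EReal.coe_ne_bot m) (hlQ_ne_top hp hyy)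

lemma toReal_hlQ_le_self (hp : 0 < p) (hm : ∀ x, m ≤ f x) {y : X} (hyy : d y y = 0) :
    (hlQ d p (fun x => (f x : EReal)) t y).toReal ≤ f y := by
  simpa using EReal.toReal_le_toReal (hlQ_le hp hyy) (hlQ_ne_bot hm y) (EReal.coe_ne_top _)

lemma toReal_hlQ_le (hp : 0 < p) (ht : 0 < t) (hm : ∀ x, m ≤ f x) {x z : X} {r : ℝ}
    (hr : 0 ≤ r) (hxz : d x z ≤ ENNReal.ofReal r) :
    (hlQ d p (fun x => (f x : EReal)) t z).toReal ≤ f x + r ^ p / (p * t ^ (p - 1)) := by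
  have hxz_top : d x z ≠ ⊤ := ne_top_of_le_ne_top ENNReal.ofReal_ne_top hxz
  have hcost := EReal.toReal_le_toReal (iInf_le _ x) (hlQ_ne_bot hm z)
    (by rw [hlCost_eq_coe hp ht hxz_top]; exact EReal.coe_ne_top _)
  rw [hlCost_eq_coe hp ht hxz_top, EReal.toReal_coe] at hcost
  refine hcost.trans ?_
  gcongr
  exact ENNReal.toReal_le_of_le_ofReal hr hxz

lemma exists_lt_toReal_hlQ_add (hp : 0 < p) (ht : 0 < t) (hm : ∀ x, m ≤ f x) {y : X}
    (hyy : d y y = 0) {ε : ℝ} (hε : 0 < ε) :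
    ∃ x, d x y ≠ ⊤ ∧
      f x + (d x y).toReal ^ p / (p * t ^ (p - 1)) <
        (hlQ d p (fun x => (f x : EReal)) t y).toReal + ε := by
  have hlt : hlQ d p (fun x => (f x : EReal)) t y <
      (((hlQ d p (fun x => (f x : EReal)) t y).toReal + ε : ℝ) : EReal) := by
    conv_lhs => rw [← EReal.coe_toReal (hlQ_ne_top hp hyy) (hlQ_ne_bot hm y)]
    exact EReal.coe_lt_coe_iff.2 (lt_add_of_pos_right _ hε)
  obtain ⟨x, hx⟩ := iInf_lt_iff.1 hlt
  have hxy : d x y ≠ ⊤ := fun h =>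
    EReal.coe_ne_top _ (top_le_iff.1 (hlCost_eq_top hp h ▸ hx.le))
  rw [hlCost_eq_coe hp ht hxy, EReal.coe_lt_coe_iff] at hx
  exact ⟨x, hxy, hx⟩

lemma dist_le_of_hlCost_le (hp : 0 < p) (ht : 0 < t) (hm : ∀ x, m ≤ f x) {x y : X} {B : ℝ}
    (hB : hlCost d p (fun x => (f x : EReal)) t x y ≤ B) :
    d x y ≤ ENNReal.ofReal ((p * t ^ (p - 1) * (B - m)) ^ (1 / p)) := by
  have hC : 0 < p * t ^ (p - 1) := by positivity
  have hxy : d x y ≠ ⊤ := fun h => EReal.coe_ne_top B (top_le_iff.1 (hlCost_eq_top hp h ▸ hB))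
  rw [hlCost_eq_coe hp ht hxy, EReal.coe_le_coe_iff] at hB
  have hpow : (d x y).toReal ^ p ≤ p * t ^ (p - 1) * (B - m) := by
    have hcost := le_sub_iff_add_le'.2 hB
    rw [div_le_iff₀' hC] at hcost
    exact hcost.trans (by gcongr; exact hm x)
  rw [← ENNReal.ofReal_toReal hxy, one_div]
  exact ENNReal.ofReal_le_ofReal
    ((Real.le_rpow_inv_iff_of_pos ENNReal.toReal_nonneg
      ((Real.rpow_nonneg ENNReal.toReal_nonneg _).trans hpow) hp).2 hpow)

lemma hlDPlus_le (hp : 0 < p) (ht : 0 < t) (hm : ∀ x, m ≤ f x) {y : X} (hyy : d y y = 0)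
    {M : ℝ} (hM : f y ≤ M) :
    hlDPlus d p (fun x => (f x : EReal)) y t ≤
      ENNReal.ofReal ((p * t ^ (p - 1) * (M - m)) ^ (1 / p)) := by
  refine iSup_le fun ⟨u, hu⟩ => ?_
  have hbound : Continuous fun B : ℝ => ENNReal.ofReal ((p * t ^ (p - 1) * (B - m)) ^ (1 / p)) :=
    ENNReal.continuous_ofReal.comp (by fun_prop (disch := positivity))
  refine hbound.continuousAt.le_of_forall_lt_imp_le fun B hB => ?_
  have hQB : hlQ d p (fun x => (f x : EReal)) t y < B :=
    (hlQ_le hp hyy).trans_lt (EReal.coe_lt_coe_iff.2 (hM.trans_lt hB))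
  refine limsup_le_of_le (by isBoundedDefault) ?_
  filter_upwards [hu.eventually_lt_const hQB] with i hi using dist_le_of_hlCost_le hp ht hm hi.le

lemma toReal_hlQ_sub_toReal_hlQ_le (hp : 1 < p) (hq : 1 / p + 1 / q = 1) (ht : 0 < t)
    (hd0 : ∀ x, d x x = 0) (htri : ∀ x y z, d x z ≤ d x y + d y z) {M : ℝ}
    (hm : ∀ x, m ≤ f x) (hM : ∀ x, f x ≤ M) {y z : X} (hyz : d y z ≠ ⊤) {ε : ℝ} (hε : 0 < ε) :
    (hlQ d p (fun x => (f x : EReal)) t z).toReal -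
        (hlQ d p (fun x => (f x : EReal)) t y).toReal ≤
      2 ^ (p - 1) * (p * (M - m + ε) / t) ^ (1 / q) * (d y z).toReal + ε := by
  have hp0 : 0 < p := by linarith
  obtain ⟨x, hxy, hx⟩ := exists_lt_toReal_hlQ_add hp0 ht hm (hd0 y) hε
  set C := p * t ^ (p - 1) with hC_def
  have hC : 0 < C := by positivity
  set ry := (hlQ d p (fun x => (f x : EReal)) t y).toReal
  set rz := (hlQ d p (fun x => (f x : EReal)) t z).toReal
  have hry : m ≤ ry := le_toReal_hlQ hp0 hm (hd0 y)
  have hryM : ry ≤ M := (toReal_hlQ_le_self hp0 hm (hd0 y)).trans (hM y)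
  have hrz : rz ≤ M := (toReal_hlQ_le_self hp0 hm (hd0 z)).trans (hM z)
  set s := M - m + ε
  have hs : 0 < s := by linarith
  set R := (C * s) ^ (1 / p) with hR_def
  have hR : 0 < R := by positivity
  have hRp : R ^ p = C * s := by
    rw [hR_def, one_div, Real.rpow_inv_rpow (by positivity) hp0.ne']
  rw [← hopfLax_lipschitz_const_eq hp hq ht hs, ← hC_def]
  set b := (d y z).toReal
  set A := (d x y).toReal
  have hA : A ≤ R := by
    have hApow : A ^ p ≤ C * s := by
      have hAs : A ^ p / C < s := by linarith [hm x]
      rw [div_lt_iff₀' hC] at hAs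
      exact hAs.le
    rwa [hR_def, one_div, Real.le_rpow_inv_iff_of_pos ENNReal.toReal_nonneg (by positivity) hp0]
  have hxz : d x z ≤ ENNReal.ofReal (A + b) := by
    rw [ENNReal.ofReal_add ENNReal.toReal_nonneg ENNReal.toReal_nonneg,
      ENNReal.ofReal_toReal hxy, ENNReal.ofReal_toReal hyz]
    exact htri x y z
  have hQz := toReal_hlQ_le hp0 ht hm (by positivity) hxz
  rcases le_or_gt b R with hbR | hRb
  · calc rz - ry ≤ ((A + b) ^ p - A ^ p) / C + ε := by rw [sub_div]; linarith
      _ ≤ p * (A + b) ^ (p - 1) * b / C + ε := by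
        gcongr; exact rpow_add_sub_rpow_le hp.le ENNReal.toReal_nonneg ENNReal.toReal_nonneg
      _ ≤ p * (2 * R) ^ (p - 1) / C * b + ε := by
        rw [mul_div_right_comm]; gcongr; linarith
  · have hpow_mono : R ^ (p - 1) * R ≤ p * (2 * R) ^ (p - 1) * b := by
      have h2R : R ^ (p - 1) ≤ (2 * R) ^ (p - 1) :=
        Real.rpow_le_rpow hR.le (by linarith) (by linarith)
      calc R ^ (p - 1) * R ≤ (2 * R) ^ (p - 1) * b := by gcongr
        _ ≤ p * ((2 * R) ^ (p - 1) * b) := le_mul_of_one_le_left (by positivity) hp.le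
        _ = p * (2 * R) ^ (p - 1) * b := (mul_assoc _ _ _).symm
    calc rz - ry ≤ R ^ (p - 1) * R / C := by
          rw [Real.rpow_sub_one hR.ne', div_mul_cancel₀ _ hR.ne', hRp,
            mul_div_cancel_left₀ _ hC.ne']
          linarith
      _ ≤ p * (2 * R) ^ (p - 1) / C * b + ε := by
          rw [div_mul_eq_mul_div]; linarith [div_le_div_of_nonneg_right hpow_mono hC.le]

lemma ofReal_toReal_hlQ_sub_toReal_hlQ_le (hp : 1 < p) (hq : 1 / p + 1 / q = 1) (ht : 0 < t)
    (hd0 : ∀ x, d x x = 0) (htri : ∀ x y z, d x z ≤ d x y + d y z) {M : ℝ}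
    (hm : ∀ x, m ≤ f x) (hM : ∀ x, f x ≤ M) (y z : X) :
    ENNReal.ofReal ((hlQ d p (fun x => (f x : EReal)) t z).toReal -
        (hlQ d p (fun x => (f x : EReal)) t y).toReal) ≤
      ENNReal.ofReal (2 ^ (p - 1) * (p * (M - m) / t) ^ (1 / q)) * d y z := by
  have hp0 : 0 < p := by linarith
  rcases (sub_nonneg.2 ((hm y).trans (hM y))).eq_or_lt with hosc | hosc
  · rw [ENNReal.ofReal_of_nonpos]
    · exact zero_le
    · linarith [le_toReal_hlQ hp0 hm (hd0 y) (t := t),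
        toReal_hlQ_le_self hp0 hm (hd0 z) (t := t), hM z]
  have hK : 0 < 2 ^ (p - 1) * (p * (M - m) / t) ^ (1 / q) := by
    have := div_pos (mul_pos hp0 hosc) ht
    positivity
  rcases eq_or_ne (d y z) ⊤ with htop | hyz
  · rw [htop, ENNReal.mul_top (ENNReal.ofReal_pos.2 hK).ne']
    exact le_top
  rw [← ENNReal.ofReal_toReal hyz, ← ENNReal.ofReal_mul hK.le]
  refine ENNReal.ofReal_le_ofReal ?_
  have hq0 : 0 < 1 / q := by
    have : 1 / p < 1 := (div_lt_one hp0).2 hp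
    linarith
  have hbound : Continuous fun ε : ℝ =>
      2 ^ (p - 1) * (p * (M - m + ε) / t) ^ (1 / q) * (d y z).toReal + ε := by
    fun_prop (disch := positivity)
  simpa using hbound.continuousAt.le_of_forall_lt_imp_le (a := 0) fun ε hε =>
    toReal_hlQ_sub_toReal_hlQ_le hp hq ht hd0 htri hm hM hyz hε

end HopfLax

/-- uniform bounds for the Hopf–Lax semigroup of a bounded function `f` with
`m ≤ f ≤ M`: `inf f ≤ Q_t f ≤ sup f`; every minimizing sequence for `Q_t f(y)` stays within
distance `(p t^{p−1} osc(f))^{1/p}` of `y` (`𝔡⁺(y,t) ≤ (p t^{p−1}(M−m))^{1/p}`); and `Q_t f`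
is forward Lipschitz with `Lip(Q_t f) ≤ 2^{p−1}(p·osc(f)/t)^{1/q}`, where `osc(f) = M − m`
and `1/p + 1/q = 1`. -/
theorem stmt_19 {X : Type*} [TopologicalSpace X] (d : X → X → ENNReal)
    (hX : IsForwardExtendedPolish X d) (p q : ℝ) (hp : 1 < p) (hq : 1 / p + 1 / q = 1)
    (f : X → ℝ) (m M : ℝ) (hm : ∀ x, m ≤ f x) (hM : ∀ x, f x ≤ M)
    (t : ℝ) (ht : 0 < t) :
    (∀ y : X, (m : EReal) ≤ hlQ d p (fun x => (f x : EReal)) t y ∧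
      hlQ d p (fun x => (f x : EReal)) t y ≤ (M : EReal)) ∧
    (∀ y : X, hlDPlus d p (fun x => (f x : EReal)) y t ≤
      ENNReal.ofReal ((p * t ^ (p - 1) * (M - m)) ^ (1 / p))) ∧
    (∀ y z : X,
      ENNReal.ofReal ((hlQ d p (fun x => (f x : EReal)) t z).toReal -
          (hlQ d p (fun x => (f x : EReal)) t y).toReal) ≤
        ENNReal.ofReal ((2 : ℝ) ^ (p - 1) * (p * (M - m) / t) ^ (1 / q)) * d y z) := by
  have hp0 : 0 < p := by linarith
  have hd0 : ∀ x, d x x = 0 := fun x => (hX.zero_iff x x).2 rfl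
  refine ⟨fun y => ⟨le_hlQ hm y, (hlQ_le hp0 (hd0 y)).trans (EReal.coe_le_coe_iff.2 (hM y))⟩,
    fun y => hlDPlus_le hp0 ht hm (hd0 y) (hM y),
    ofReal_toReal_hlQ_sub_toReal_hlQ_le hp hq ht hd0 hX.triangle hm hM⟩
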